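/- (Key counting lemma) Let n have q-adic digits α_0, …, α_s and define m_j ∈ F_q[x] as the polynomial whose coefficient of x^k is the α-th enumerated element a_α of F_q where α is the k-th q-adic digit of j (with a_0 = 0). Then for each r ≥ 1, the number of indices j ∈ {0, 1, …, n−1} such that m_n − m_j is divisible by x^r equals α_r + α_{r+1} q + ⋯ + α_s q^{s−r}. -/

import Mathlib

/-!
The coefficient of `x^k` in `m_j` is `a` applied to the `k`-th base-`q` digit of `j`, and `a`
is injective on digits, so `x^r ∣ m_n - m_j` says exactly that `j` and `n` have the same `r`
lowest digits, i.e. `j ≡ n [MOD q^r]`. Among `0, …, n-1` there are `⌊n / q^r⌋` such `j`, and the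
base-`q` digits of `⌊n / q^r⌋` are those of `n` shifted down by `r`.
-/

noncomputable section

open scoped Classical

def mPoly {Fq : Type*} [CommRing Fq] (a : ℕ → Fq) (q j : ℕ) : Polynomial Fq :=
  ∑ k ∈ Finset.range (Nat.digits q j).length,
    Polynomial.C (a ((Nat.digits q j).getD k 0)) * Polynomial.X ^ k

open Finset Polynomial

namespace Nat

theorem sum_range_div_pow_mod_mul_pow (b m L : ℕ) :
    ∑ k ∈ range L, m / b ^ k % b * b ^ k = m % b ^ L := by
  induction L with
  | zero => simp [mod_one]
  | succ L ih => rw [sum_range_succ, ih, mod_pow_succ, mul_comm (b ^ L)]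

theorem div_pow_mod_eq_mod_pow_div_pow_mod {b k r : ℕ} (m : ℕ) (hk : k < r) :
    m / b ^ k % b = m % b ^ r / b ^ k % b := by
  have hsplit : b ^ r = b ^ k * b ^ (r - k) := by rw [← pow_add, Nat.add_sub_cancel' hk.le]
  rw [hsplit, mod_mul_right_div_self, mod_mod_of_dvd _ (dvd_pow_self b (by omega))]

theorem modEq_pow_iff_div_pow_mod_eq {b r m n : ℕ} :
    m ≡ n [MOD b ^ r] ↔ ∀ k < r, m / b ^ k % b = n / b ^ k % b := by
  refine ⟨fun h k hk => ?_, fun h => ?_⟩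
  · rw [div_pow_mod_eq_mod_pow_div_pow_mod m hk, div_pow_mod_eq_mod_pow_div_pow_mod n hk, h]
  · rw [ModEq, ← sum_range_div_pow_mod_mul_pow, ← sum_range_div_pow_mod_mul_pow]
    exact sum_congr rfl fun k hk => by rw [h k (mem_range.mp hk)]

theorem card_filter_range_modEq_self (n : ℕ) {m : ℕ} (hm : 0 < m) :
    #{j ∈ range n | j ≡ n [MOD m]} = n / m := by
  rw [← count_eq_card_filter_range, count_modEq_card n hm, if_neg (lt_irrefl _), add_zero]

theorem sum_getD_digits_add_mul_pow {b : ℕ} (hb : 2 ≤ b) (n r : ℕ) :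
    ∑ k ∈ range (b.digits n).length, (b.digits n).getD (r + k) 0 * b ^ k = n / b ^ r := by
  have hlt : n / b ^ r < b ^ (b.digits n).length :=
    (div_le_self n _).trans_lt (lt_base_pow_length_digits hb)
  simp_rw [getD_digits _ _ hb, pow_add, ← Nat.div_div_eq_div_mul]
  rw [sum_range_div_pow_mod_mul_pow, mod_eq_of_lt hlt]

end Nat

theorem two_le_of_surjective_fin {α : Type*} [Nontrivial α] {q : ℕ} {a : ℕ → α}
    (ha : Function.Surjective fun i : Fin q => a i) : 2 ≤ q := by
  obtain ⟨x, hx⟩ := exists_ne (a 0)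
  obtain ⟨i, rfl⟩ := ha x
  have hi : (i : ℕ) ≠ 0 := fun h => hx (by simp only [← h])
  omega

section mPoly

variable {R : Type*} [CommRing R] {a : ℕ → R}

theorem coeff_mPoly (ha0 : a 0 = 0) (q j k : ℕ) :
    (mPoly a q j).coeff k = a ((Nat.digits q j).getD k 0) := by
  simp only [mPoly, finsetSum_coeff, coeff_C_mul, coeff_X_pow, mul_ite, mul_one, mul_zero,
    sum_ite_eq, mem_range]
  split_ifs with hk
  · rfl
  · rw [List.getD_eq_default _ _ (not_lt.mp hk), ha0]

theorem X_pow_dvd_mPoly_sub_iff_modEq {q : ℕ} (hq : 2 ≤ q)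
    (ha : Function.Injective fun i : Fin q => a i) (ha0 : a 0 = 0) (r n j : ℕ) :
    X ^ r ∣ mPoly a q n - mPoly a q j ↔ j ≡ n [MOD q ^ r] := by
  have digit_lt (m k : ℕ) : m / q ^ k % q < q := Nat.mod_lt _ (by omega)
  simp only [X_pow_dvd_iff, coeff_sub, coeff_mPoly ha0, sub_eq_zero, Nat.getD_digits _ _ hq,
    Nat.modEq_pow_iff_div_pow_mod_eq]
  refine forall₂_congr fun k _ => ⟨fun h => ?_, fun h => by rw [h]⟩
  exact (congrArg Fin.val (@ha ⟨_, digit_lt n k⟩ ⟨_, digit_lt j k⟩ h)).symm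

end mPoly

theorem count_divisible_differences_general
    (q : ℕ)
    (Fq : Type*) [Field Fq]
    (a : ℕ → Fq) (ha : Function.Bijective fun i : Fin q => a i)
    (ha0 : a 0 = 0) (n r : ℕ) :
    ((Finset.range n).filter fun j =>
        (Polynomial.X : Polynomial Fq) ^ r ∣ mPoly a q n - mPoly a q j).card =
      ∑ k ∈ Finset.range (Nat.digits q n).length,
        ((Nat.digits q n).getD (r + k) 0) * q ^ k := by
  have hq : 2 ≤ q := two_le_of_surjective_fin ha.surjective
  simp_rw [X_pow_dvd_mPoly_sub_iff_modEq hq ha.injective ha0]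
  rw [Nat.card_filter_range_modEq_self n (by positivity), Nat.sum_getD_digits_add_mul_pow hq]

theorem count_divisible_differences
    (p γ : ℕ) (hp : p.Prime) (hγ : 0 < γ) (q : ℕ) (hq : q = p ^ γ)
    (Fq : Type*) [Field Fq] [Fintype Fq] (hcard : Fintype.card Fq = q)
    (a : ℕ → Fq) (ha : Function.Bijective fun i : Fin q => a i)
    (ha0 : a 0 = 0) (n r : ℕ) (hr : 1 ≤ r) :
    ((Finset.range n).filter fun j =>
        (Polynomial.X : Polynomial Fq) ^ r ∣ mPoly a q n - mPoly a q j).card =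
      ∑ k ∈ Finset.range (Nat.digits q n).length,
        ((Nat.digits q n).getD (r + k) 0) * q ^ k :=
  count_divisible_differences_general q Fq a ha ha0 n r
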